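/- Let V be a finite-dimensional commutative algebra over a field k with basis {x_i}_{i∈I} and structure constants N_{ij}^k (so x_i x_j = Σ_k N_{ij}^k x_k). Define the convolution product by x_i * x_j = (δ_{ij}/d_i)·x_i for given nonzero scalars d_i. Suppose s: V → V is the linear map s(x_i) = Σ_j s_{ij} x_j for a matrix (s_{ij}) satisfying s(x y) = s(x) * s(y) for all x,y, and s is invertible with s_{0l} ≠ 0 for all l (where 0 ∈ I is the identity basis index, x_0 = 1). Then N_{ij}^k = Σ_l s_{jl} s_{il} (s⁻¹)_{lk} / s_{0l}. -/

import Mathlib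

open Finset Matrix

/-!
Feeding basis vectors into the intertwining relation shows that `s` diagonalizes left
multiplication by `x_i`: the row `l ↦ ∑ₘ N_{ij}^m s_{ml}` equals `s_{il} s_{jl} / d_l`.
Taking `i = j = 0` identifies `d_l` with `s_{0l}`, and multiplying by `s⁻¹` on the right
recovers `N_{ij}^k`.
-/

lemma Matrix.eq_vecMul_of_vecMul_eq {R I : Type*} [Semiring R] [Fintype I] [DecidableEq I]
    {s sInv : Matrix I I R} (h : s * sInv = 1) {c f : I → R} (hc : c ᵥ* s = f) :
    c = f ᵥ* sInv := by
  rw [← hc, vecMul_vecMul, h, vecMul_one]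

section Intertwining

variable {𝕜 I : Type*} [Field 𝕜] [Fintype I] [DecidableEq I]
  {N : I → I → I → 𝕜} {s : Matrix I I 𝕜} {d : I → 𝕜}

lemma vecMul_structConst_of_intertwining
    (h : ∀ x y : I → 𝕜, ∀ j, ∑ i, (∑ a, ∑ b, x a * y b * N a b i) * s i j
      = (∑ i, x i * s i j) * (∑ i, y i * s i j) / d j) (i j l : I) :
    (N i j ᵥ* s) l = s i l * s j l / d l := by
  simpa [vecMul, dotProduct, Pi.single_apply, ite_mul] using h (Pi.single i 1) (Pi.single j 1) l

lemma eq_unit_row_of_vecMul_structConst {z l : I} (hunit : ∀ b c, N z b c = if b = c then 1 else 0)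
    (h0 : s z l ≠ 0) (h : (N z z ᵥ* s) l = s z l * s z l / d l) : d l = s z l := by
  have hunit_row : (N z z ᵥ* s) l = s z l := by simp [vecMul, dotProduct, hunit, ite_mul]
  rw [hunit_row] at h
  have hd : d l ≠ 0 := fun hd => h0 (by simpa [hd] using h)
  rw [eq_div_iff hd] at h
  exact mul_left_cancel₀ h0 h

end Intertwining

theorem stmt0_general {𝕜 : Type*} [Field 𝕜] {I : Type*} [Fintype I] [DecidableEq I]
    (z : I)                                  -- the identity basis index `0`
    (d : I → 𝕜)
    (N : I → I → I → 𝕜)                      -- fusion structure constants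
    (s sInv : Matrix I I 𝕜)
    -- (V, fusion) is a commutative algebra with unit x_z = 1 :
    (hunitl : ∀ b c, N z b c = if b = c then 1 else 0)
    -- s(x y) = s(x) * s(y), with s(x)_j = ∑_i x_i s_{ij} and (u * v)_i = u_i v_i / d_i :
    (hVerlinde : ∀ x y : I → 𝕜, ∀ j,
      ∑ i, (∑ a, ∑ b, x a * y b * N a b i) * s i j
        = (∑ i, x i * s i j) * (∑ i, y i * s i j) / d j)
    -- s is invertible :
    (hInv₁ : s * sInv = 1)
    (h0 : ∀ l, s z l ≠ 0) :
    ∀ i j k, N i j k = ∑ l, s j l * s i l * sInv l k / s z l := by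
  intro i j k
  have hrow := vecMul_structConst_of_intertwining hVerlinde
  have hd : ∀ l, d l = s z l := fun l => eq_unit_row_of_vecMul_structConst hunitl (h0 l) (hrow z z l)
  have hdiag : N i j ᵥ* s = fun l => s i l * s j l / s z l := by
    funext l
    rw [hrow, hd]
  rw [eq_vecMul_of_vecMul_eq hInv₁ hdiag]
  simp only [vecMul, dotProduct]
  exact Finset.sum_congr rfl fun l _ => by ring

/-- Verlinde formula in its familiar matrix form, for a commutative
fusion-type algebra whose structure constants are diagonalized by an invertible
matrix `s` intertwining the fusion product with the convolution product. -/
theorem stmt0 {𝕜 : Type*} [Field 𝕜] {I : Type*} [Fintype I] [DecidableEq I]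
    (z : I)                                  -- the identity basis index `0`
    (d : I → 𝕜) (hd : ∀ i, d i ≠ 0)
    (N : I → I → I → 𝕜)                      -- fusion structure constants
    (s sInv : Matrix I I 𝕜)
    -- (V, fusion) is a commutative algebra with unit x_z = 1 :
    (hcomm : ∀ a b c, N a b c = N b a c)
    (hassoc : ∀ a b c e, ∑ m, N a b m * N m c e = ∑ m, N b c m * N a m e)
    (hunitl : ∀ b c, N z b c = if b = c then 1 else 0)
    (hunitr : ∀ a c, N a z c = if a = c then 1 else 0)
    -- s(x y) = s(x) * s(y), with s(x)_j = ∑_i x_i s_{ij} and (u * v)_i = u_i v_i / d_i :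
    (hVerlinde : ∀ x y : I → 𝕜, ∀ j,
      ∑ i, (∑ a, ∑ b, x a * y b * N a b i) * s i j
        = (∑ i, x i * s i j) * (∑ i, y i * s i j) / d j)
    -- s is invertible :
    (hInv₁ : s * sInv = 1) (hInv₂ : sInv * s = 1)
    (h0 : ∀ l, s z l ≠ 0) :
    ∀ i j k, N i j k = ∑ l, s j l * s i l * sInv l k / s z l :=
  stmt0_general z d N s sInv hunitl hVerlinde hInv₁ h0
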